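/- arXiv:1203.3588 — 2 statements merged into one kernel-verified Lean document; each statement's English description precedes it below -/
import Mathlib

section
/- For every integer m ≥ 5, every vertex of Φ_m lies on exactly two 4-cycles, and these two 4-cycles intersect in a path of length 1 (a single edge). -/
set_option maxHeartbeats 1000000

open scoped Classical

/-- The graph `Φ_m`: vertices `x_i = (false, i)` and `y_i = (true, i)` for
`i ∈ ZMod m`, with edges `x_i ∼ y_i`, `x_i ∼ y_{i+1}`, `x_i ∼ y_{i-1}`. -/
def Phi (m : ℕ) : SimpleGraph (Bool × ZMod m) :=
  SimpleGraph.fromRel (fun u v =>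
    u.1 = false ∧ v.1 = true ∧ (v.2 = u.2 ∨ v.2 = u.2 + 1 ∨ v.2 = u.2 - 1))

/-- `s` is the vertex set of a 4-cycle of `G`. -/
def IsFourCycle {V : Type*} [DecidableEq V] (G : SimpleGraph V) (s : Finset V) : Prop :=
  ∃ a b c d : V, a ≠ b ∧ a ≠ c ∧ a ≠ d ∧ b ≠ c ∧ b ≠ d ∧ c ≠ d ∧
    s = {a, b, c, d} ∧ G.Adj a b ∧ G.Adj b c ∧ G.Adj c d ∧ G.Adj d a

variable {m : ℕ}

lemma zsmall (hm : 5 ≤ m) {k : ℕ} (hk : 0 < k) (hkm : k < 5) : (k : ZMod m) ≠ 0 := by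
  intro h
  have := (ZMod.natCast_eq_zero_iff k m).mp h
  have := Nat.le_of_dvd hk this
  omega

lemma adj_xy (i a : ZMod m) :
    (Phi m).Adj (false, i) (true, a) ↔ (a = i ∨ a = i + 1 ∨ a = i - 1) := by
  simp [Phi, SimpleGraph.fromRel_adj, Prod.ext_iff]

lemma adj_bool {u v : Bool × ZMod m} (h : (Phi m).Adj u v) : u.1 ≠ v.1 := by
  rcases h with ⟨hne, h | h⟩
  · simp [h.1, h.2.1]
  · simp [h.1, h.2.1]

/-- the canonical 4-cycle through `x_j, x_{j+1}, y_j, y_{j+1}` -/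
def Cyc (m : ℕ) (j : ZMod m) : Finset (Bool × ZMod m) :=
  {(false, j), (false, j + 1), (true, j), (true, j + 1)}

lemma mem_Cyc {b : Bool} {i j : ZMod m} :
    ((b, i) : Bool × ZMod m) ∈ Cyc m j ↔ i = j ∨ i = j + 1 := by
  cases b <;> simp [Cyc, Prod.ext_iff]

lemma key (hm : 5 ≤ m) {p q r s : ZMod m} (hpq : p ≠ q) (hrs : r ≠ s)
    (h1 : r = p ∨ r = p + 1 ∨ r = p - 1)
    (h2 : r = q ∨ r = q + 1 ∨ r = q - 1)
    (h3 : s = p ∨ s = p + 1 ∨ s = p - 1)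
    (h4 : s = q ∨ s = q + 1 ∨ s = q - 1) :
    (q = p + 1 ∧ ((r = p ∧ s = p + 1) ∨ (r = p + 1 ∧ s = p))) ∨
    (p = q + 1 ∧ ((r = q ∧ s = q + 1) ∨ (r = q + 1 ∧ s = q))) := by
  have f1 : (1 : ZMod m) ≠ 0 := by simpa using zsmall hm (k := 1) (by norm_num) (by norm_num)
  have f2 : (2 : ZMod m) ≠ 0 := by simpa using zsmall hm (k := 2) (by norm_num) (by norm_num)
  have f3 : (3 : ZMod m) ≠ 0 := by simpa using zsmall hm (k := 3) (by norm_num) (by norm_num)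
  have f4 : (4 : ZMod m) ≠ 0 := by simpa using zsmall hm (k := 4) (by norm_num) (by norm_num)
  rcases h1 with rfl | rfl | rfl <;> rcases h3 with h3 | h3 | h3 <;>
    rcases h2 with h2 | h2 | h2 <;> rcases h4 with h4 | h4 | h4 <;>
  first
  | exact absurd h3.symm hrs
  | (exfalso; apply hpq;
     first
     | linear_combination h2 | linear_combination -h2
     | linear_combination h2 - h4 + h3 | linear_combination h4 - h3
     | linear_combination h3 - h4 | linear_combination h4 - h3 - h2)
  | (exfalso; apply f1;
     first
     | linear_combination h2 - h4 + h3 | linear_combination h4 - h3 - h2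
     | linear_combination h2 + h4 - h3 | linear_combination h3 - h4 - h2)
  | (exfalso; apply f2;
     first
     | linear_combination h2 - h4 + h3 | linear_combination h4 - h3 - h2
     | linear_combination h2 + h4 - h3 | linear_combination h3 - h4 - h2)
  | (exfalso; apply f3;
     first
     | linear_combination h2 - h4 + h3 | linear_combination h4 - h3 - h2
     | linear_combination h2 + h4 - h3 | linear_combination h3 - h4 - h2)
  | (exfalso; apply f4;
     first
     | linear_combination h2 - h4 + h3 | linear_combination h4 - h3 - h2
     | linear_combination h2 + h4 - h3 | linear_combination h3 - h4 - h2)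
  | exact Or.inl ⟨by linear_combination -h2, Or.inl ⟨rfl, by linear_combination h3⟩⟩
  | exact Or.inl ⟨by linear_combination -h2, Or.inr ⟨rfl, by linear_combination h3⟩⟩
  | exact Or.inr ⟨by linear_combination h2, Or.inl ⟨by linear_combination h2, by linear_combination h3 + h2⟩⟩
  | exact Or.inr ⟨by linear_combination h2, Or.inr ⟨by linear_combination h2, by linear_combination h3 + h2⟩⟩

lemma fourCycle_eq (hm : 5 ≤ m) {u : Finset (Bool × ZMod m)}
    (h : IsFourCycle (Phi m) u) : ∃ j : ZMod m, u = Cyc m j := by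
  obtain ⟨a, b, c, d, hab, hac, had, hbc, hbd, hcd, hset, e1, e2, e3, e4⟩ := h
  obtain ⟨ab, ai⟩ := a; obtain ⟨bb, bi⟩ := b; obtain ⟨cb, ci⟩ := c; obtain ⟨db, di⟩ := d
  have b1 := adj_bool e1; have b2 := adj_bool e2; have b3 := adj_bool e3; have b4 := adj_bool e4
  simp only at b1 b2 b3 b4
  cases ab
  · -- a = x, b = y, c = x, d = y
    have hbb : bb = true := by revert b1; cases bb <;> simp
    have hcb : cb = false := by subst hbb; revert b2; cases cb <;> simp
    have hdb : db = true := by subst hcb; revert b3; cases db <;> simp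
    subst hbb; subst hcb; subst hdb
    have hpq : ai ≠ ci := fun h => hac (by simp [h])
    have hrs : bi ≠ di := fun h => hbd (by simp [h])
    have k1 : bi = ai ∨ bi = ai + 1 ∨ bi = ai - 1 := (adj_xy ai bi).mp e1
    have k2 : bi = ci ∨ bi = ci + 1 ∨ bi = ci - 1 := (adj_xy ci bi).mp e2.symm
    have k3 : di = ci ∨ di = ci + 1 ∨ di = ci - 1 := (adj_xy ci di).mp e3
    have k4 : di = ai ∨ di = ai + 1 ∨ di = ai - 1 := (adj_xy ai di).mp e4.symm
    rcases key hm hpq hrs k1 k2 k4 k3 with ⟨hq, hc⟩ | ⟨hq, hc⟩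
    · refine ⟨ai, ?_⟩
      rcases hc with ⟨hr, hs⟩ | ⟨hr, hs⟩ <;> subst hq <;> subst hr <;> subst hs <;>
        (clear * - hset; rw [hset]; simp only [Cyc, Finset.ext_iff, Finset.mem_insert, Finset.mem_singleton];
         intro z; tauto)
    · refine ⟨ci, ?_⟩
      rcases hc with ⟨hr, hs⟩ | ⟨hr, hs⟩ <;> subst hq <;> subst hr <;> subst hs <;>
        (clear * - hset; rw [hset]; simp only [Cyc, Finset.ext_iff, Finset.mem_insert, Finset.mem_singleton];
         intro z; tauto)
  · -- a = y, b = x, c = y, d = x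
    have hbb : bb = false := by revert b1; cases bb <;> simp
    have hcb : cb = true := by subst hbb; revert b2; cases cb <;> simp
    have hdb : db = false := by subst hcb; revert b3; cases db <;> simp
    subst hbb; subst hcb; subst hdb
    have hpq : bi ≠ di := fun h => hbd (by simp [h])
    have hrs : ai ≠ ci := fun h => hac (by simp [h])
    have k1 : ai = bi ∨ ai = bi + 1 ∨ ai = bi - 1 := (adj_xy bi ai).mp e1.symm
    have k2 : ci = bi ∨ ci = bi + 1 ∨ ci = bi - 1 := (adj_xy bi ci).mp e2
    have k3 : ci = di ∨ ci = di + 1 ∨ ci = di - 1 := (adj_xy di ci).mp e3.symm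
    have k4 : ai = di ∨ ai = di + 1 ∨ ai = di - 1 := (adj_xy di ai).mp e4
    rcases key hm hpq hrs k1 k4 k2 k3 with ⟨hq, hc⟩ | ⟨hq, hc⟩
    · refine ⟨bi, ?_⟩
      rcases hc with ⟨hr, hs⟩ | ⟨hr, hs⟩ <;> subst hq <;> subst hr <;> subst hs <;>
        (clear * - hset; rw [hset]; simp only [Cyc, Finset.ext_iff, Finset.mem_insert, Finset.mem_singleton];
         intro z; tauto)
    · refine ⟨di, ?_⟩
      rcases hc with ⟨hr, hs⟩ | ⟨hr, hs⟩ <;> subst hq <;> subst hr <;> subst hs <;>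
        (clear * - hset; rw [hset]; simp only [Cyc, Finset.ext_iff, Finset.mem_insert, Finset.mem_singleton];
         intro z; tauto)

lemma isFourCycle_Cyc (hm : 5 ≤ m) (j : ZMod m) : IsFourCycle (Phi m) (Cyc m j) := by
  have f1 : (1 : ZMod m) ≠ 0 := by simpa using zsmall hm (k := 1) (by norm_num) (by norm_num)
  refine ⟨(false, j), (true, j), (false, j + 1), (true, j + 1), ?_, ?_, ?_, ?_, ?_, ?_, ?_,
    ?_, ?_, ?_, ?_⟩
  · simp
  · simp [Prod.ext_iff]; intro h; exact f1 h
  · simp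
  · simp
  · simp [Prod.ext_iff]; intro h; exact f1 h
  · simp
  · ext z; obtain ⟨zb, zi⟩ := z; cases zb <;> simp [Cyc, Prod.ext_iff]
  · exact (adj_xy j j).mpr (Or.inl rfl)
  · exact ((adj_xy (j + 1) j).mpr (Or.inr (Or.inr (by ring)))).symm
  · exact (adj_xy (j + 1) (j + 1)).mpr (Or.inl rfl)
  · exact ((adj_xy j (j + 1)).mpr (Or.inr (Or.inl rfl))).symm

/-- For `m ≥ 5`, every vertex of `Φ_m` lies on exactly two 4-cycles, and these
two 4-cycles intersect in a path of length 1 (a single edge). -/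
theorem stmt4 (m : ℕ) [NeZero m] (hm : 5 ≤ m) (v : Bool × ZMod m) :
    ∃ s t : Finset (Bool × ZMod m), s ≠ t ∧
      IsFourCycle (Phi m) s ∧ IsFourCycle (Phi m) t ∧ v ∈ s ∧ v ∈ t ∧
      (∀ u : Finset (Bool × ZMod m), IsFourCycle (Phi m) u → v ∈ u → u = s ∨ u = t) ∧
      (s ∩ t).card = 2 ∧ ∃ a b, a ∈ s ∩ t ∧ b ∈ s ∩ t ∧ (Phi m).Adj a b := by
  obtain ⟨b, i⟩ := v
  have f1 : (1 : ZMod m) ≠ 0 := by simpa using zsmall hm (k := 1) (by norm_num) (by norm_num)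
  have f2 : (2 : ZMod m) ≠ 0 := by simpa using zsmall hm (k := 2) (by norm_num) (by norm_num)
  have hint : Cyc m (i - 1) ∩ Cyc m i = {((false, i) : Bool × ZMod m), (true, i)} := by
    ext z; obtain ⟨zb, zi⟩ := z
    simp only [Finset.mem_inter, mem_Cyc, Finset.mem_insert, Finset.mem_singleton,
      Prod.ext_iff]
    constructor
    · rintro ⟨h1 | h1, h2 | h2⟩ <;>
        first
        | (exfalso;
           first
           | exact f1 (by linear_combination h2 - h1)
           | exact f1 (by linear_combination h1 - h2)
           | exact f2 (by linear_combination h2 - h1)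
           | exact f2 (by linear_combination h1 - h2))
        | (cases zb <;> simp [h1, h2])
    · rintro (⟨hb, rfl⟩ | ⟨hb, rfl⟩) <;> exact ⟨Or.inr (by ring), Or.inl rfl⟩
  refine ⟨Cyc m (i - 1), Cyc m i, ?_, isFourCycle_Cyc hm _, isFourCycle_Cyc hm _,
    mem_Cyc.mpr (Or.inr (by ring)), mem_Cyc.mpr (Or.inl rfl), ?_, ?_, ?_⟩
  · intro h
    have h1 : ((false, i - 1) : Bool × ZMod m) ∈ Cyc m i := by
      rw [← h]; exact mem_Cyc.mpr (Or.inl rfl)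
    rcases mem_Cyc.mp h1 with h' | h'
    · exact f1 (by linear_combination -h')
    · exact f2 (by linear_combination -h')
  · intro u hu hv
    obtain ⟨j, rfl⟩ := fourCycle_eq hm hu
    rcases mem_Cyc.mp hv with h | h
    · right; rw [h]
    · left; have hj : j = i - 1 := by linear_combination -h
      rw [hj]
  · rw [hint]
    rw [Finset.card_insert_of_notMem (by simp), Finset.card_singleton]
  · exact ⟨(false, i), (true, i), by rw [hint]; simp, by rw [hint]; simp,
      (adj_xy i i).mpr (Or.inl rfl)⟩
end

section
/- The graph Φ_{95}(4, 7, 16, 27, 38, 52, 62, 81) is a bipartite, 11-regular, vertex-transitive graph of order 190 and diameter 3. -/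
open scoped Classical

/-- The graph `Φ_m(a_1,…,a_k)`: vertices `x_i = (false, i)`, `y_i = (true, i)`
for `i ∈ ZMod m`, with edges `x_i ∼ y_i`, `x_i ∼ y_{i+1}`, `x_i ∼ y_{i-1}` and
`x_i ∼ y_{i+a_j}` for each `j`. -/
def PhiGen (m : ℕ) {k : ℕ} (a : Fin k → ℕ) : SimpleGraph (Bool × ZMod m) :=
  SimpleGraph.fromRel (fun u v => u.1 = false ∧ v.1 = true ∧
    (v.2 = u.2 ∨ v.2 = u.2 + 1 ∨ v.2 = u.2 - 1 ∨ ∃ t, v.2 = u.2 + (a t : ZMod m)))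

/-- The graph `Φ_95(4,7,16,27,38,52,62,81)`. -/
def G190 : SimpleGraph (Bool × ZMod 95) :=
  PhiGen 95 ![4, 7, 16, 27, 38, 52, 62, 81]

/-!
`Φ_m(a)` is the Haar graph of `ZMod m` with connection set `S = {0, 1, -1, a_1, …, a_k}`:
`x_i ∼ y_j` exactly when `j - i ∈ S`. The translations `i ↦ i + c` and the swap
`x_i ↔ y_{-i}` are automorphisms, so the graph is vertex-transitive and every question about
degrees and distances reduces to the vertex `x_0`, whose neighbours are the `y_s`, `s ∈ S`;
hence it is `|S|`-regular. Colouring by the side makes it bipartite, so walks between the two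
sides have odd length. If every residue is a difference `s - t` of elements of `S` (true for
`m = 95`, checked by `decide`), then `x_0 - y_s - x_{s-t}` reaches every `x_j` in two steps and
`y_j` in three (using `0 ∈ S`), giving diameter at most `3`; since `2 ∉ S`, the odd distance
from `x_0` to `y_2` is exactly `3`.
-/

namespace PhiGen

open SimpleGraph

variable {m k : ℕ} {a : Fin k → ℕ}

variable (m) in
def connSet (a : Fin k → ℕ) : Finset (ZMod m) :=
  {0, 1, -1} ∪ Finset.univ.image fun t => (a t : ZMod m)

theorem adj_false_true_iff {i j : ZMod m} :
    (PhiGen m a).Adj (false, i) (true, j) ↔ j - i ∈ connSet m a := by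
  have h (c : ZMod m) : j - i = c ↔ j = i + c := sub_eq_iff_eq_add'
  simp [PhiGen, connSet, eq_comm (b := j - i), h, ← sub_eq_add_neg]

theorem adj_true_false_iff {i j : ZMod m} :
    (PhiGen m a).Adj (true, j) (false, i) ↔ j - i ∈ connSet m a := by
  rw [adj_comm, adj_false_true_iff]

theorem fst_ne_of_adj {u v : Bool × ZMod m} (h : (PhiGen m a).Adj u v) : u.1 ≠ v.1 := by
  obtain ⟨-, ⟨hu, hv, -⟩ | ⟨hv, hu, -⟩⟩ := (fromRel_adj _ _ _).1 h <;> simp [hu, hv]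

theorem not_adj_of_fst_eq {b : Bool} {i j : ZMod m} : ¬ (PhiGen m a).Adj (b, i) (b, j) :=
  fun h => fst_ne_of_adj h rfl

def bicoloring : (PhiGen m a).Coloring Bool := Coloring.mk Prod.fst fst_ne_of_adj

theorem colorable_two : (PhiGen m a).Colorable 2 := bicoloring.colorable

theorem even_length_iff {u v : Bool × ZMod m} (p : (PhiGen m a).Walk u v) :
    Even p.length ↔ u.1 = v.1 := by
  rw [bicoloring.even_length_iff_congr]
  exact Bool.eq_iff_iff.symm

def translate (c : ZMod m) : PhiGen m a ≃g PhiGen m a where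
  toEquiv := (Equiv.refl Bool).prodCongr (Equiv.addRight c)
  map_rel_iff' {u v} := by
    obtain ⟨_ | _, i⟩ := u <;> obtain ⟨_ | _, j⟩ := v <;>
      simp [not_adj_of_fst_eq, adj_false_true_iff, adj_true_false_iff]

theorem translate_apply (c : ZMod m) (u : Bool × ZMod m) :
    translate (a := a) c u = (u.1, u.2 + c) := rfl

def reflect : PhiGen m a ≃g PhiGen m a where
  toEquiv := (Equiv.boolNot).prodCongr (Equiv.neg (ZMod m))
  map_rel_iff' {u v} := by
    obtain ⟨_ | _, i⟩ := u <;> obtain ⟨_ | _, j⟩ := v <;>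
      simp [not_adj_of_fst_eq, adj_false_true_iff, adj_true_false_iff, neg_add_eq_sub]

theorem reflect_apply (u : Bool × ZMod m) : reflect (a := a) u = (!u.1, -u.2) := rfl

theorem exists_iso_apply_eq (u v : Bool × ZMod m) :
    ∃ φ : PhiGen m a ≃g PhiGen m a, φ u = v := by
  obtain ⟨b, i⟩ := u
  obtain ⟨b', j⟩ := v
  by_cases hb : b = b'
  · exact ⟨translate (j - i), by simp [translate_apply, hb]⟩
  · refine ⟨reflect.trans (translate (j + i)), ?_⟩
    simp [translate_apply, reflect_apply, Bool.eq_not.2 hb]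

theorem neighborFinset_false [NeZero m] (i : ZMod m) :
    (PhiGen m a).neighborFinset (false, i) =
      (connSet m a).image fun s => (true, i + s) := by
  ext ⟨_ | _, j⟩
  · simp [not_adj_of_fst_eq]
  · simp [adj_false_true_iff, ← eq_sub_iff_add_eq']

theorem degree_eq_card_connSet [NeZero m] (v : Bool × ZMod m) :
    (PhiGen m a).degree v = (connSet m a).card := by
  obtain ⟨φ, rfl⟩ := exists_iso_apply_eq (a := a) (false, 0) v
  rw [φ.degree_eq, ← card_neighborFinset_eq_degree, neighborFinset_false]
  exact Finset.card_image_of_injective _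
    ((Prod.mk_right_injective true).comp (add_right_injective 0))

section DifferenceCover

variable (hS : ∀ d : ZMod m, ∃ s ∈ connSet m a, ∃ t ∈ connSet m a, d = s - t)
include hS

theorem exists_walk_false_false (i j : ZMod m) :
    ∃ p : (PhiGen m a).Walk (false, i) (false, j), p.length = 2 := by
  obtain ⟨s, hs, t, ht, hst⟩ := hS (j - i)
  have h₁ : (PhiGen m a).Adj (false, i) (true, i + s) := by
    simpa [adj_false_true_iff] using hs
  have h₂ : (PhiGen m a).Adj (true, i + s) (false, j) := by
    rw [adj_true_false_iff, show i + s - j = t by linear_combination -hst]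
    exact ht
  exact ⟨.cons h₁ (.cons h₂ .nil), rfl⟩

theorem exists_walk_length_le_three (u v : Bool × ZMod m) :
    ∃ p : (PhiGen m a).Walk u v, p.length ≤ 3 := by
  obtain ⟨φ, rfl⟩ := exists_iso_apply_eq (a := a) (false, 0) u
  obtain ⟨p, hp⟩ : ∃ p : (PhiGen m a).Walk (false, 0) (φ.symm v), p.length ≤ 3 := by
    obtain ⟨_ | _, j⟩ := φ.symm v
    · obtain ⟨p, hp⟩ := exists_walk_false_false hS 0 j
      exact ⟨p, by omega⟩
    · obtain ⟨p, hp⟩ := exists_walk_false_false hS 0 j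
      have hj : (PhiGen m a).Adj (false, j) (true, j) := by
        simp [adj_false_true_iff, connSet]
      exact ⟨p.concat hj, by simp [hp]⟩
  exact ⟨(p.map φ.toHom).copy rfl (φ.apply_symm_apply v), by simpa using hp⟩

theorem connected : (PhiGen m a).Connected :=
  (connected_iff _).2
    ⟨fun u v => ⟨(exists_walk_length_le_three hS u v).choose⟩, ⟨(false, 0)⟩⟩

theorem dist_le_three (u v : Bool × ZMod m) : (PhiGen m a).dist u v ≤ 3 :=
  have ⟨p, hp⟩ := exists_walk_length_le_three hS u v
  (dist_le p).trans hp

end DifferenceCover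

theorem three_le_dist {i j : ZMod m} (hr : (PhiGen m a).Reachable (false, i) (true, j))
    (h : j - i ∉ connSet m a) :
    3 ≤ (PhiGen m a).dist (false, i) (true, j) := by
  obtain ⟨p, hp⟩ := hr.exists_walk_length_eq_dist
  have hodd : ¬ Even p.length := by simp [even_length_iff]
  have hne : p.length ≠ 1 := fun h1 => h (adj_false_true_iff.1 (p.adj_of_length_eq_one h1))
  rw [← hp]
  rcases Nat.even_or_odd p.length with he | ⟨n, hn⟩
  · exact absurd he hodd
  · omega

end PhiGen

open PhiGen

theorem phi95_connSet_sub_cover :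
    ∀ d : ZMod 95, ∃ s ∈ connSet 95 ![4, 7, 16, 27, 38, 52, 62, 81],
      ∃ t ∈ connSet 95 ![4, 7, 16, 27, 38, 52, 62, 81], d = s - t := by
  decide

theorem phi95_card_connSet : (connSet 95 ![4, 7, 16, 27, 38, 52, 62, 81]).card = 11 := by decide

theorem phi95_two_notMem_connSet :
    (2 : ZMod 95) ∉ connSet 95 ![4, 7, 16, 27, 38, 52, 62, 81] := by
  decide

/-- `Φ_95(4,7,16,27,38,52,62,81)` is a bipartite, 11-regular, vertex-transitive
graph of order 190 and diameter 3. -/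
theorem stmt13 :
    G190.Colorable 2 ∧
    G190.IsRegularOfDegree 11 ∧
    (∀ u v : Bool × ZMod 95, ∃ φ : G190 ≃g G190, φ u = v) ∧
    Fintype.card (Bool × ZMod 95) = 190 ∧
    G190.Connected ∧ (∀ u v, G190.dist u v ≤ 3) ∧ (∃ u v, G190.dist u v = 3) :=
  have hS := phi95_connSet_sub_cover
  ⟨colorable_two, fun v => (degree_eq_card_connSet v).trans phi95_card_connSet,
    exists_iso_apply_eq, rfl, connected hS, dist_le_three hS, (false, 0), (true, 2),
    (dist_le_three hS _ _).antisymm (three_le_dist ((connected hS).preconnected _ _)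
      (by rw [sub_zero]; exact phi95_two_notMem_connSet))⟩
end
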